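/- arXiv:2408.10370 — 4 statements merged into one kernel-verified Lean document; each statement's English description precedes it below -/
import Mathlib

section
/- Let F : ℝⁿ → ℝᵐ have an L₀-Lipschitz Jacobian J on a convex ball B with ‖J‖ bounded and ‖F‖ bounded on B, and set φ(x) = ½‖F(x)‖². Then there exists L₄ > 0 such that for all x, y ∈ B: ‖∇φ(y) − ∇φ(x) − J(x)ᵀJ(x)(y − x)‖ ≤ L₄‖x − y‖² + ‖(J(x) − J(y))ᵀF(y)‖. -/
open ContinuousLinearMap

theorem incomplete_linearization_of_gradient {n m : ℕ}
    (F : EuclideanSpace ℝ (Fin n) → EuclideanSpace ℝ (Fin m))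
    (J : EuclideanSpace ℝ (Fin n) → (EuclideanSpace ℝ (Fin n) →L[ℝ] EuclideanSpace ℝ (Fin m)))
    (x₀ : EuclideanSpace ℝ (Fin n)) (r : ℝ)
    (hdiff : ∀ x ∈ Metric.ball x₀ r, HasFDerivAt F (J x) x)
    (L₀ L₂ β : ℝ) (hL₀ : 0 < L₀)
    (hlip : ∀ x ∈ Metric.ball x₀ r, ∀ y ∈ Metric.ball x₀ r, ‖J x - J y‖ ≤ L₀ * ‖x - y‖)
    (hJbound : ∀ x ∈ Metric.ball x₀ r, ‖J x‖ ≤ L₂)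
    (hFbound : ∀ x ∈ Metric.ball x₀ r, ‖F x‖ ≤ β) :
    ∃ L₄ : ℝ, 0 < L₄ ∧
      ∀ x ∈ Metric.ball x₀ r, ∀ y ∈ Metric.ball x₀ r,
        ‖adjoint (J y) (F y) - adjoint (J x) (F x) - adjoint (J x) (J x (y - x))‖ ≤
          L₄ * ‖x - y‖ ^ 2 + ‖adjoint (J x - J y) (F y)‖ := by
  refine ⟨L₀ * max L₂ 0 + 1, by positivity, fun x hx y hy => ?_⟩
  have hseg : segment ℝ x y ⊆ Metric.ball x₀ r :=
    (convex_ball x₀ r).segment_subset hx hy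
  -- Taylor remainder bound on the segment
  have hrem : ‖F y - F x - (J x) (y - x)‖ ≤ (L₀ * ‖x - y‖) * ‖y - x‖ := by
    refine Convex.norm_image_sub_le_of_norm_hasFDerivWithin_le'
      (f := F) (f' := J) (φ := J x) (s := segment ℝ x y) ?_ ?_ (convex_segment x y)
      (left_mem_segment ℝ x y) (right_mem_segment ℝ x y)
    · exact fun z hz => ((hdiff z (hseg hz)).hasFDerivWithinAt)
    · intro z hz
      calc ‖J z - J x‖ ≤ L₀ * ‖z - x‖ := hlip z (hseg hz) x hx
        _ ≤ L₀ * ‖x - y‖ := by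
          have : dist x z + dist z y = dist x y := dist_add_dist_of_mem_segment hz
          have hzx : dist z x ≤ dist x y := by
            rw [dist_comm z x]; nlinarith [dist_nonneg (x := z) (y := y)]
          rw [← dist_eq_norm, ← dist_eq_norm]
          exact mul_le_mul_of_nonneg_left hzx hL₀.le
  -- algebraic decomposition
  have hdecomp : adjoint (J y) (F y) - adjoint (J x) (F x) - adjoint (J x) ((J x) (y - x)) =
      adjoint (J x) (F y - F x - (J x) (y - x)) - adjoint (J x - J y) (F y) := by
    rw [map_sub (adjoint : _ ≃ₗᵢ⋆[ℝ] _)]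
    simp only [ContinuousLinearMap.sub_apply, map_sub]
    abel
  rw [hdecomp]
  have h1 : ‖adjoint (J x) (F y - F x - (J x) (y - x))‖ ≤
      (L₀ * max L₂ 0) * ‖x - y‖ ^ 2 := by
    calc ‖adjoint (J x) (F y - F x - (J x) (y - x))‖
        ≤ ‖adjoint (J x)‖ * ‖F y - F x - (J x) (y - x)‖ := le_opNorm _ _
      _ ≤ ‖J x‖ * ((L₀ * ‖x - y‖) * ‖y - x‖) := by
          rw [LinearIsometryEquiv.norm_map]
          exact mul_le_mul_of_nonneg_left hrem (norm_nonneg _)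
      _ ≤ max L₂ 0 * ((L₀ * ‖x - y‖) * ‖y - x‖) := by
          refine mul_le_mul_of_nonneg_right (le_trans (hJbound x hx) (le_max_left _ _)) ?_
          positivity
      _ = (L₀ * max L₂ 0) * ‖x - y‖ ^ 2 := by rw [norm_sub_rev y x]; ring
  calc ‖adjoint (J x) (F y - F x - (J x) (y - x)) - adjoint (J x - J y) (F y)‖
      ≤ ‖adjoint (J x) (F y - F x - (J x) (y - x))‖ + ‖adjoint (J x - J y) (F y)‖ :=
        norm_sub_le _ _
    _ ≤ (L₀ * max L₂ 0) * ‖x - y‖ ^ 2 + ‖adjoint (J x - J y) (F y)‖ := by linarith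
    _ ≤ (L₀ * max L₂ 0 + 1) * ‖x - y‖ ^ 2 + ‖adjoint (J x - J y) (F y)‖ := by
        nlinarith [sq_nonneg ‖x - y‖]
end

section
/- Let d = d_N + d_R with d_N ∈ ker(J), d_R ∈ ker(J)⊥, and suppose (JᵀJ + λ LᵀL)d = −JᵀF with λ > 0 and ker(J) ∩ ker(L) = {0}, and d ∉ ker(J) with d_N ≠ 0. Then ‖L d_N‖² = −(L d_N)ᵀ(L d_R), and consequently ‖L d_N‖ ≤ ‖L d_R‖. -/
open ContinuousLinearMap
open scoped RealInnerProductSpace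

section

variable {E F G : Type*} [NormedAddCommGroup E] [InnerProductSpace ℝ E] [CompleteSpace E]
  [NormedAddCommGroup F] [InnerProductSpace ℝ F] [CompleteSpace F]
  [NormedAddCommGroup G] [InnerProductSpace ℝ G] [CompleteSpace G]

/-- Pairing the regularized normal equations with `x ∈ ker J` kills both `J`-terms. -/
theorem inner_apply_apply_eq_zero_of_regularized_normal_eq {J : E →L[ℝ] F} {L : E →L[ℝ] G}
    {f : F} {lam : ℝ} (hlam : lam ≠ 0) {d x : E}
    (hsol : ((adjoint J).comp J + lam • (adjoint L).comp L) d = -(adjoint J f))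
    (hx : J x = 0) : ⟪L x, L d⟫ = 0 := by
  have hpair := congrArg (⟪x, ·⟫) hsol
  simp only [add_apply, comp_apply, smul_apply, inner_add_right, inner_smul_right,
    inner_neg_right, adjoint_inner_right, hx, inner_zero_left, zero_add, neg_zero] at hpair
  exact (mul_eq_zero.mp hpair).resolve_left hlam

end

theorem norm_le_norm_of_norm_sq_eq_neg_inner {E : Type*} [NormedAddCommGroup E]
    [InnerProductSpace ℝ E] {u v : E} (h : ‖u‖ ^ 2 = -⟪u, v⟫) : ‖u‖ ≤ ‖v‖ := by
  have hcs : ‖u‖ * ‖u‖ ≤ ‖u‖ * ‖v‖ := by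
    rw [← sq, h, ← inner_neg_right, ← norm_neg v]
    exact real_inner_le_norm u (-v)
  rcases (norm_nonneg u).eq_or_lt with hu | hu
  · exact hu ▸ norm_nonneg v
  · exact le_of_mul_le_mul_left hcs hu

theorem LM_null_component_bound_general {n m p : ℕ}
    (J : EuclideanSpace ℝ (Fin n) →L[ℝ] EuclideanSpace ℝ (Fin m))
    (L : EuclideanSpace ℝ (Fin n) →L[ℝ] EuclideanSpace ℝ (Fin p))
    (F : EuclideanSpace ℝ (Fin m)) (lam : ℝ) (hlam : 0 < lam)
    (d dN dR : EuclideanSpace ℝ (Fin n))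
    (hd : d = dN + dR)
    (hdN : dN ∈ LinearMap.ker (J : EuclideanSpace ℝ (Fin n) →ₗ[ℝ] EuclideanSpace ℝ (Fin m)))
    (hsol : ((adjoint J).comp J + lam • (adjoint L).comp L) d = -(adjoint J F)) :
    ‖L dN‖ ^ 2 = -⟪L dN, L dR⟫ ∧ ‖L dN‖ ≤ ‖L dR‖ := by
  have horth := inner_apply_apply_eq_zero_of_regularized_normal_eq hlam.ne' hsol hdN
  rw [hd, map_add, inner_add_right, real_inner_self_eq_norm_sq] at horth
  have hsplit : ‖L dN‖ ^ 2 = -⟪L dN, L dR⟫ := by linarith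
  exact ⟨hsplit, norm_le_norm_of_norm_sq_eq_neg_inner hsplit⟩

theorem LM_null_component_bound {n m p : ℕ}
    (J : EuclideanSpace ℝ (Fin n) →L[ℝ] EuclideanSpace ℝ (Fin m))
    (L : EuclideanSpace ℝ (Fin n) →L[ℝ] EuclideanSpace ℝ (Fin p))
    (F : EuclideanSpace ℝ (Fin m)) (lam : ℝ) (hlam : 0 < lam)
    (hker : LinearMap.ker (J : EuclideanSpace ℝ (Fin n) →ₗ[ℝ] EuclideanSpace ℝ (Fin m)) ⊓ LinearMap.ker (L : EuclideanSpace ℝ (Fin n) →ₗ[ℝ] EuclideanSpace ℝ (Fin p)) = ⊥)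
    (d dN dR : EuclideanSpace ℝ (Fin n))
    (hd : d = dN + dR)
    (hdN : dN ∈ LinearMap.ker (J : EuclideanSpace ℝ (Fin n) →ₗ[ℝ] EuclideanSpace ℝ (Fin m))) (hdR : dR ∈ (LinearMap.ker (J : EuclideanSpace ℝ (Fin n) →ₗ[ℝ] EuclideanSpace ℝ (Fin m)) : Submodule ℝ _)ᗮ)
    (hsol : ((adjoint J).comp J + lam • (adjoint L).comp L) d = -(adjoint J F))
    (hdnotker : d ∉ LinearMap.ker (J : EuclideanSpace ℝ (Fin n) →ₗ[ℝ] EuclideanSpace ℝ (Fin m))) (hdN0 : dN ≠ 0) :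
    ‖L dN‖ ^ 2 = -⟪L dN, L dR⟫ ∧ ‖L dN‖ ≤ ‖L dR‖ :=
  LM_null_component_bound_general J L F lam hlam d dN dR hd hdN hsol
end

section
/- Let d = d_N + d_R (orthogonal decomposition along ker(J) and ker(J)⊥) solve (JᵀJ + λ LᵀL)d = −JᵀF with λ > 0. Let s > 0 be the smallest positive singular value of J. Then the component d_R satisfies ‖J d_R‖² ≤ −(J d_R)ᵀF and ‖d_R‖ ≤ ‖JᵀF‖ / s². -/
open ContinuousLinearMap
open scoped RealInnerProductSpace

theorem LM_range_component_bound {n m p : ℕ}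
    (J : EuclideanSpace ℝ (Fin n) →L[ℝ] EuclideanSpace ℝ (Fin m))
    (L : EuclideanSpace ℝ (Fin n) →L[ℝ] EuclideanSpace ℝ (Fin p))
    (F : EuclideanSpace ℝ (Fin m)) (lam : ℝ) (hlam : 0 < lam)
    (hker : LinearMap.ker (J : EuclideanSpace ℝ (Fin n) →ₗ[ℝ] EuclideanSpace ℝ (Fin m)) ⊓ LinearMap.ker (L : EuclideanSpace ℝ (Fin n) →ₗ[ℝ] EuclideanSpace ℝ (Fin p)) = ⊥)
    (d dN dR : EuclideanSpace ℝ (Fin n))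
    (hd : d = dN + dR)
    (hdN : dN ∈ LinearMap.ker (J : EuclideanSpace ℝ (Fin n) →ₗ[ℝ] EuclideanSpace ℝ (Fin m))) (hdR : dR ∈ (LinearMap.ker (J : EuclideanSpace ℝ (Fin n) →ₗ[ℝ] EuclideanSpace ℝ (Fin m)) : Submodule ℝ _)ᗮ)
    (hsol : ((adjoint J).comp J + lam • (adjoint L).comp L) d = -(adjoint J F))
    (s : ℝ) (hs : 0 < s)
    (hsmall : ∀ v ∈ (LinearMap.ker (J : EuclideanSpace ℝ (Fin n) →ₗ[ℝ] EuclideanSpace ℝ (Fin m)) : Submodule ℝ _)ᗮ, s * ‖v‖ ≤ ‖J v‖) :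
    ‖J dR‖ ^ 2 ≤ -⟪J dR, F⟫ ∧ ‖dR‖ ≤ ‖adjoint J F‖ / s ^ 2 := by
  have hJd : J d = J dR := by
    rw [hd, map_add, (show J dN = 0 from LinearMap.mem_ker.mp hdN), zero_add]
  have h1 := congrArg (fun x => ⟪x, d⟫) hsol
  simp only [add_apply, comp_apply, smul_apply, inner_add_left, inner_smul_left,
    inner_neg_left, adjoint_inner_left, RCLike.ofReal_real_eq_id, id_eq] at h1
  rw [hJd] at h1
  have key : ‖J dR‖ ^ 2 + lam * ‖L d‖ ^ 2 = -⟪J dR, F⟫ := by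
    simp only [starRingEnd_apply, star_trivial] at h1
    rw [real_inner_self_eq_norm_sq, real_inner_self_eq_norm_sq,
      real_inner_comm (J dR) F] at h1
    have hc := real_inner_comm (J dR) F
    linarith [h1, hc]
  have h2 : lam * ‖L d‖ ^ 2 ≥ 0 := by positivity
  have first : ‖J dR‖ ^ 2 ≤ -⟪J dR, F⟫ := by linarith
  refine ⟨first, ?_⟩
  have hsb := hsmall dR hdR
  have hcs : -⟪J dR, F⟫ ≤ ‖adjoint J F‖ * ‖dR‖ := by
    have : -⟪J dR, F⟫ = ⟪-(adjoint J F), dR⟫ := by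
      rw [inner_neg_left, adjoint_inner_left, real_inner_comm]
    rw [this]
    calc ⟪-(adjoint J F), dR⟫ ≤ ‖-(adjoint J F)‖ * ‖dR‖ := real_inner_le_norm _ _
      _ = ‖adjoint J F‖ * ‖dR‖ := by rw [norm_neg]
  rw [le_div_iff₀ (by positivity : (0:ℝ) < s ^ 2)]
  rcases ((norm_nonneg dR).eq_or_lt.imp Eq.symm id) with h0 | h0
  · rw [h0]; simp
  · have hsq : (s * ‖dR‖) ^ 2 ≤ ‖J dR‖ ^ 2 := by
      apply pow_le_pow_left₀ (by positivity) hsb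
    nlinarith
end

section
/- Consider F(x₁,x₂) = (x₁², x₂², x₁ + x₂, 1) and φ(x) = ½‖F(x)‖². Along the sequence x_k = (1/k, −1/k), the ratio ‖∇φ(x_k)‖ / ‖x_k‖ tends to 0 as k → ∞; in particular, the local error bound ω·dist(x, {0}) ≤ ‖∇φ(x)‖ fails for every ω > 0 in any neighborhood of the origin. -/
open Filter

noncomputable def φ₃ (x : ℝ × ℝ) : ℝ :=
  (1 / 2) * ((x.1 ^ 2) ^ 2 + (x.2 ^ 2) ^ 2 + (x.1 + x.2) ^ 2 + 1)

lemma hasFDerivAt_phi (x : ℝ × ℝ) :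
    HasFDerivAt φ₃
      ((2 * x.1 ^ 3 + x.1 + x.2) • ContinuousLinearMap.fst ℝ ℝ ℝ +
        (2 * x.2 ^ 3 + x.1 + x.2) • ContinuousLinearMap.snd ℝ ℝ ℝ) x := by
  have hx1 : HasFDerivAt (fun p : ℝ × ℝ => p.1) (ContinuousLinearMap.fst ℝ ℝ ℝ) x :=
    hasFDerivAt_fst
  have hx2 : HasFDerivAt (fun p : ℝ × ℝ => p.2) (ContinuousLinearMap.snd ℝ ℝ ℝ) x :=
    hasFDerivAt_snd
  have g1 : HasDerivAt (fun t : ℝ => (t ^ 2) ^ 2) (4 * x.1 ^ 3) x.1 := by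
    have := (hasDerivAt_pow 2 x.1).pow 2
    exact this.congr_deriv (by push_cast; ring)
  have g2 : HasDerivAt (fun t : ℝ => (t ^ 2) ^ 2) (4 * x.2 ^ 3) x.2 := by
    have := (hasDerivAt_pow 2 x.2).pow 2
    exact this.congr_deriv (by push_cast; ring)
  have h1 := g1.comp_hasFDerivAt x hx1
  have h2 := g2.comp_hasFDerivAt x hx2
  have g3 : HasDerivAt (fun t : ℝ => t ^ 2) (2 * (x.1 + x.2)) (x.1 + x.2) := by
    have := hasDerivAt_pow 2 (x.1 + x.2)
    exact this.congr_deriv (by push_cast; ring)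
  have h3 := g3.comp_hasFDerivAt x (hx1.add hx2)
  have h := (((h1.add h2).add h3).add_const 1).const_mul (1/2)
  refine h.congr_fderiv ?_
  ext v <;> simp <;> ring

lemma myNormFstLe : ‖ContinuousLinearMap.fst ℝ ℝ ℝ‖ ≤ 1 :=
  ContinuousLinearMap.opNorm_le_bound _ zero_le_one fun v => by
    rw [one_mul]; exact norm_fst_le v

lemma myNormSndLe : ‖ContinuousLinearMap.snd ℝ ℝ ℝ‖ ≤ 1 :=
  ContinuousLinearMap.opNorm_le_bound _ zero_le_one fun v => by
    rw [one_mul]; exact norm_snd_le v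

lemma norm_fderiv_le (x : ℝ × ℝ) :
    ‖fderiv ℝ φ₃ x‖ ≤ |2 * x.1 ^ 3 + x.1 + x.2| + |2 * x.2 ^ 3 + x.1 + x.2| := by
  rw [(hasFDerivAt_phi x).fderiv]
  calc ‖(2 * x.1 ^ 3 + x.1 + x.2) • ContinuousLinearMap.fst ℝ ℝ ℝ +
        (2 * x.2 ^ 3 + x.1 + x.2) • ContinuousLinearMap.snd ℝ ℝ ℝ‖
      ≤ ‖(2 * x.1 ^ 3 + x.1 + x.2) • ContinuousLinearMap.fst ℝ ℝ ℝ‖ +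
        ‖(2 * x.2 ^ 3 + x.1 + x.2) • ContinuousLinearMap.snd ℝ ℝ ℝ‖ := norm_add_le _ _
    _ ≤ |2 * x.1 ^ 3 + x.1 + x.2| * 1 + |2 * x.2 ^ 3 + x.1 + x.2| * 1 := by
        gcongr
        · refine le_trans (ContinuousLinearMap.opNorm_smul_le _ _) ?_
          rw [Real.norm_eq_abs]; gcongr; exact myNormFstLe
        · refine le_trans (ContinuousLinearMap.opNorm_smul_le _ _) ?_
          rw [Real.norm_eq_abs]; gcongr; exact myNormSndLe
    _ = _ := by ring

lemma norm_fderiv_k (t : ℝ) (ht : 0 ≤ t) :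
    ‖fderiv ℝ φ₃ (t, -t)‖ ≤ 4 * t ^ 3 := by
  have := norm_fderiv_le (t, -t)
  simp only at this
  calc ‖fderiv ℝ φ₃ (t, -t)‖ ≤ |2 * t ^ 3 + t + -t| + |2 * (-t) ^ 3 + t + -t| := this
    _ = 4 * t ^ 3 := by
        have : (2 : ℝ) * (-t) ^ 3 + t + -t = -(2 * t ^ 3) := by ring
        rw [this, abs_neg]
        have h1 : (2 : ℝ) * t ^ 3 + t + -t = 2 * t ^ 3 := by ring
        rw [h1, abs_of_nonneg (by positivity)]
        ring

lemma norm_pt (t : ℝ) (ht : 0 ≤ t) : ‖((t, -t) : ℝ × ℝ)‖ = t := by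
  simp [Prod.norm_def, Real.norm_eq_abs, abs_of_nonneg ht]

theorem example3_error_bound_fails :
    Tendsto
      (fun k : ℕ =>
        ‖fderiv ℝ φ₃ (1 / (k : ℝ), -(1 / (k : ℝ)))‖ /
          ‖((1 / (k : ℝ), -(1 / (k : ℝ))) : ℝ × ℝ)‖)
      atTop (nhds 0) ∧
    ∀ ω : ℝ, 0 < ω → ∀ ε : ℝ, 0 < ε →
      ¬ ∀ x ∈ Metric.ball (0 : ℝ × ℝ) ε, ω * ‖x‖ ≤ ‖fderiv ℝ φ₃ x‖ := by
  constructor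
  · have hg : Tendsto (fun k : ℕ => 4 * ((1 / (k : ℝ)) * (1 / (k : ℝ)))) atTop (nhds 0) := by
      have h := tendsto_one_div_atTop_nhds_zero_nat (𝕜 := ℝ)
      have := (h.mul h).const_mul (4 : ℝ)
      simpa using this
    apply squeeze_zero' (Eventually.of_forall fun k => by positivity)
      _ hg
    filter_upwards [eventually_ge_atTop 1] with k hk
    have hk0 : (0 : ℝ) < (k : ℝ) := by exact_mod_cast Nat.pos_of_ne_zero (by omega)
    have ht : (0 : ℝ) < 1 / (k : ℝ) := by positivity
    rw [norm_pt _ ht.le]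
    rw [div_le_iff₀ ht]
    calc ‖fderiv ℝ φ₃ (1 / (k : ℝ), -(1 / (k : ℝ)))‖ ≤ 4 * (1 / (k : ℝ)) ^ 3 :=
          norm_fderiv_k _ ht.le
      _ = 4 * (1 / (k : ℝ) * (1 / (k : ℝ))) * (1 / (k : ℝ)) := by ring
  · intro ω hω ε hε hbound
    obtain ⟨k, hk⟩ := exists_nat_gt (max (max (1 / ε) 1) (4 / ω))
    have hk1 : (1 : ℝ) < (k : ℝ) := lt_of_le_of_lt (le_max_of_le_left (le_max_right _ _)) hk
    have hk0 : (0 : ℝ) < (k : ℝ) := by linarith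
    set t : ℝ := 1 / (k : ℝ) with htdef
    have ht : 0 < t := by positivity
    have hmem : ((t, -t) : ℝ × ℝ) ∈ Metric.ball (0 : ℝ × ℝ) ε := by
      rw [Metric.mem_ball, dist_zero_right, norm_pt _ ht.le]
      rw [htdef, div_lt_iff₀ hk0]
      have h1 : 1 / ε < (k : ℝ) := lt_of_le_of_lt (le_max_of_le_left (le_max_left _ _)) hk
      rw [div_lt_iff₀ hε] at h1
      linarith
    have hb := hbound _ hmem
    rw [norm_pt _ ht.le] at hb
    have hub : ‖fderiv ℝ φ₃ (t, -t)‖ ≤ 4 * t ^ 3 := norm_fderiv_k _ ht.le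
    have hωk : 4 / ω < (k : ℝ) := lt_of_le_of_lt (le_max_right _ _) hk
    rw [div_lt_iff₀ hω] at hωk
    -- so 4 < k * ω, hence ω * t > 4 * t^3  since ω > 4 / k ≥ 4 / k² = 4 t² / ... 
    have key : 4 * t ^ 3 < ω * t := by
      rw [htdef]
      rw [div_pow, one_pow]
      have hk2 : (0 : ℝ) < (k : ℝ) ^ 3 := by positivity
      rw [show (4 : ℝ) * (1 / (k:ℝ)^3) = 4 / (k:ℝ)^3 by ring,
          show ω * (1 / (k:ℝ)) = ω / (k:ℝ) by ring]
      rw [div_lt_div_iff₀ hk2 hk0]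
      nlinarith [sq_nonneg ((k:ℝ) - 1)]
    linarith
end
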